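/- arXiv:1203.3257 — 3 statements merged into one kernel-verified Lean document; each statement's English description precedes it below -/
import Mathlib

section
/- Let X be a spherical 2-design of size n which is an s-distance set in √m S^{m-1}, with predegree polynomials {q_i}. Then (1/n)H((nG)^∘) = I, where H(t) = ∑_{i=0}^s q_i(t), G is the normalized Gram matrix, and for f ∈ ℝ[t] and matrix M, f(M^∘) denotes the matrix (f(M_{x,y}))_{x,y}. -/
open scoped InnerProductSpace Classical

noncomputable section

variable {V : Type*} [NormedAddCommGroup V] [InnerProductSpace ℝ V]

/-- `X` lies on the sphere of squared radius `m` (radius `√m`). -/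
def onSphere (m : ℝ) (X : Finset V) : Prop := ∀ x ∈ X, ⟪x, x⟫_ℝ = m

/-- The normalized Gram matrix `G` of `X`. -/
def gram (X : Finset V) : Matrix X X ℝ :=
  Matrix.of fun x y => (1 / (X.card : ℝ)) * ⟪(x : V), (y : V)⟫_ℝ

/-- The two conditions characterizing spherical 2-designs: `GJ = 0` and `G² = G`. -/
def IsTwoDesign (X : Finset V) : Prop :=
  (∀ x ∈ X, ∑ y ∈ X, ⟪x, y⟫_ℝ = 0) ∧
  (∀ x ∈ X, ∀ y ∈ X, (1 / (X.card : ℝ)) * ∑ z ∈ X, ⟪x, z⟫_ℝ * ⟪z, y⟫_ℝ = ⟪x, y⟫_ℝ)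

/-- `Pol_k(X)`: span of the zonal polynomials of degree at most `k`. -/
def Pol (X : Finset V) (k : ℕ) : Submodule ℝ (X → ℝ) :=
  Submodule.span ℝ {f | ∃ a ∈ X, ∃ p : Polynomial ℝ,
    p.natDegree ≤ k ∧ f = fun x => p.eval ⟪a, x.1⟫_ℝ}

/-- The inner product `(f,g) = (1/n) ∑ f(x) g(x)` on `C(X)`. -/
def inn (X : Finset V) (f g : X → ℝ) : ℝ := (1 / (X.card : ℝ)) * ∑ x, f x * g x

def innL (X : Finset V) (f : X → ℝ) : (X → ℝ) →ₗ[ℝ] ℝ where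
  toFun g := inn X f g
  map_add' g h := by
    simp only [inn, Pi.add_apply, mul_add, Finset.sum_add_distrib]
  map_smul' c g := by
    simp only [inn, Pi.smul_apply, smul_eq_mul, RingHom.id_apply]
    rw [Finset.sum_congr rfl (fun x _ => by ring : ∀ x ∈ Finset.univ, f x * (c * g x) = c * (f x * g x)),
      ← Finset.mul_sum]
    ring

/-- The orthogonal complement of `W` with respect to `inn`. -/
def perp (X : Finset V) (W : Submodule ℝ (X → ℝ)) : Submodule ℝ (X → ℝ) :=
  ⨅ f ∈ W, LinearMap.ker (innL X f)

/-- The harmonic spaces `Harm_k(X)`. -/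
def Harm (X : Finset V) : ℕ → Submodule ℝ (X → ℝ)
  | 0 => Pol X 0
  | (k+1) => Pol X (k+1) ⊓ perp X (Pol X k)

/-- `F` is the matrix of the orthogonal projection of `C(X)` onto `W`
(with respect to the inner product `inn`). -/
def IsProjOnto (X : Finset V) (W : Submodule ℝ (X → ℝ)) (F : Matrix X X ℝ) : Prop :=
  (∀ f, F.mulVec f ∈ W) ∧ (∀ f ∈ W, F.mulVec f = f) ∧ (∀ f ∈ perp X W, F.mulVec f = 0)

/-- The degree `S` of `X`: the least `i` with `Pol_i(X) = C(X)`. -/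
def degS (X : Finset V) : ℕ := sInf {i | Pol X i = ⊤}

/-- `A(X)`, the set of inner products between distinct points of `X`. -/
def Aset (X : Finset V) : Finset ℝ :=
  ((X ×ˢ X).filter fun p => p.1 ≠ p.2).image fun p => ⟪p.1, p.2⟫_ℝ

/-- `A'(X) = A(X) ∪ {m}`. -/
def Aset' (m : ℝ) (X : Finset V) : Finset ℝ := insert m (Aset X)

/-- `κ_α`, the number of ordered pairs of points of `X` with inner product `α`. -/
def kappa (X : Finset V) (α : ℝ) : ℕ := ((X ×ˢ X).filter fun p => ⟪p.1, p.2⟫_ℝ = α).card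

/-- The inner product `⟨p,q⟩ = (1/n²) ∑_{α ∈ A'(X)} κ_α p(α) q(α)` on polynomials. -/
def pInn (m : ℝ) (X : Finset V) (p q : Polynomial ℝ) : ℝ :=
  (1 / (X.card : ℝ) ^ 2) * ∑ α ∈ Aset' m X, (kappa X α : ℝ) * (p.eval α * q.eval α)

/-- `q` is the family of predegree polynomials of `X`. -/
def IsPredegree (m : ℝ) (X : Finset V) (s : ℕ) (q : ℕ → Polynomial ℝ) : Prop :=
  (∀ k ≤ s, (q k).natDegree = k ∧ q k ≠ 0) ∧
  (∀ k ≤ s, ∀ h ≤ s, pInn m X (q k) (q h) = if k = h then (q k).eval m else 0)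

/-- The relation matrix `A_α` of `X`. -/
def relMat (X : Finset V) (α : ℝ) : Matrix X X ℝ :=
  Matrix.of fun x y => if ⟪(x : V), (y : V)⟫_ℝ = α then 1 else 0

/-- `X` carries the structure of a `Q`-polynomial association scheme with respect to
the idempotents `F_0, …, F_s` (whose relations are given by the inner products). -/
def CarriesQPolyScheme (m : ℝ) (X : Finset V) (s : ℕ) (F : ℕ → Matrix X X ℝ) : Prop :=
  (∀ α ∈ Aset' m X, ∀ β ∈ Aset' m X, relMat X α * relMat X β ∈
      Submodule.span ℝ (relMat X '' (Aset' m X : Set ℝ))) ∧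
  (∀ i ≤ s, F i ∈ Submodule.span ℝ (relMat X '' (Aset' m X : Set ℝ))) ∧
  (∀ i ≤ s, ∀ j ≤ s, F i * F j = if i = j then F i else 0) ∧
  (∑ i ∈ Finset.range (s + 1), F i = 1) ∧
  (F 0 = Matrix.of fun _ _ => 1 / (X.card : ℝ)) ∧
  (∀ i ≤ s, ∃ v : Polynomial ℝ, v.natDegree = i ∧
      F i = Matrix.of fun x y => (1 / (X.card : ℝ)) * v.eval ((X.card : ℝ) * F 1 x y))

/-!
Let `H = q_0 + ⋯ + q_s`. The `q_k` span the polynomials of degree at most `s`, so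
`⟨q_k, q_h⟩ = δ_{k,h} q_k(m)` gives `⟨H, p⟩ = p(m)` for all of them. The form `⟨·,·⟩` only sees
the at most `s + 1` nodes `A'(X)`, and testing this identity against the Lagrange basis of the
nodes gives `κ_β H(β) / n² = δ_{β,m}` for `β ∈ A'(X)`. On the sphere only the diagonal pairs have
inner product `m`, so `κ_m = n` and `H(m) = n`, while `κ_β > 0` forces `H(β) = 0` for `β ∈ A(X)`.
-/

section Polynomial

open Polynomial

theorem mul_eval_eq_ite_of_forall_natDegree_lt {K : Type*} [Field K] {S : Finset K} {w : K → K}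
    {H : K[X]} {a : K} (ha : a ∈ S)
    (hrep : ∀ p : K[X], p.natDegree < S.card → ∑ α ∈ S, w α * (H.eval α * p.eval α) = p.eval a)
    {β : K} (hβ : β ∈ S) :
    w β * H.eval β = if β = a then 1 else 0 := by
  have hinj : Set.InjOn id (S : Set K) := Set.injOn_id _
  set L := Lagrange.basis S id β
  have hL : ∀ γ ∈ S, L.eval γ = if β = γ then 1 else 0 := fun γ hγ => by
    split_ifs with h
    · subst h
      exact Lagrange.eval_basis_self hinj hγ
    · exact Lagrange.eval_basis_of_ne (v := id) h hγ
  have hdeg : L.natDegree < S.card := by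
    rw [Lagrange.natDegree_basis hinj hβ]
    exact Nat.sub_lt (Finset.card_pos.mpr ⟨β, hβ⟩) one_pos
  calc w β * H.eval β = ∑ α ∈ S, w α * (H.eval α * L.eval α) := by
        rw [Finset.sum_eq_single_of_mem β hβ fun α hα hne => by rw [hL α hα, if_neg hne.symm]; ring,
          hL β hβ, if_pos rfl, mul_one]
    _ = L.eval a := hrep L hdeg
    _ = if β = a then 1 else 0 := hL a ha

theorem Polynomial.span_image_Iic_eq_degreeLE {K : Type*} [Field K] {s : ℕ} {q : ℕ → K[X]}
    (hq : ∀ k ≤ s, (q k).degree = k) :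
    Submodule.span K (q '' Set.Iic s) = degreeLE K s := by
  let S : Sequence K :=
    { elems' := fun i => if i ≤ s then q i else X ^ i
      degree_eq' := fun i => by
        split_ifs with hi
        · exact hq i hi
        · exact degree_X_pow i }
  have hS : S '' Set.Iic s = q '' Set.Iic s :=
    Set.image_congr fun i hi => if_pos (Set.mem_Iic.mp hi)
  rw [← hS, S.span_degreeLE]
  exact fun i _ => (leadingCoeff_ne_zero.mpr (S.ne_zero i)).isUnit

end Polynomial

section Sphere

variable {m : ℝ} {X : Finset V}

theorem onSphere.eq_of_inner_eq (hsph : onSphere m X) {x y : V} (hx : x ∈ X) (hy : y ∈ X)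
    (h : ⟪x, y⟫_ℝ = m) : x = y := by
  have hyx : ⟪y, x⟫_ℝ = m := by rw [real_inner_comm]; exact h
  have hz : ⟪x - y, x - y⟫_ℝ = 0 := by
    rw [inner_sub_left, inner_sub_right, inner_sub_right, hsph x hx, hsph y hy, h, hyx]; ring
  exact sub_eq_zero.mp (inner_self_eq_zero.mp hz)

theorem onSphere.kappa_eq_card (hsph : onSphere m X) : kappa X m = X.card := by
  have : ((X ×ˢ X).filter fun p => ⟪p.1, p.2⟫_ℝ = m) = X.image fun x => (x, x) := by
    ext ⟨a, b⟩
    simp only [Finset.mem_filter, Finset.mem_product, Finset.mem_image, Prod.mk.injEq]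
    constructor
    · rintro ⟨⟨ha, hb⟩, hab⟩
      exact ⟨a, ha, rfl, hsph.eq_of_inner_eq ha hb hab⟩
    · rintro ⟨c, hc, rfl, rfl⟩
      exact ⟨⟨hc, hc⟩, hsph c hc⟩
  rw [kappa, this, Finset.card_image_of_injective _ fun a b h => (Prod.mk.inj h).1]

theorem onSphere.inner_mem_Aset' (hsph : onSphere m X) {x y : V} (hx : x ∈ X) (hy : y ∈ X) :
    ⟪x, y⟫_ℝ ∈ Aset' m X := by
  by_cases hxy : x = y
  · subst hxy
    rw [hsph x hx]
    exact Finset.mem_insert_self _ _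
  · refine Finset.mem_insert_of_mem (Finset.mem_image.mpr ⟨(x, y), ?_, rfl⟩)
    simp [hx, hy, hxy]

end Sphere

theorem kappa_inner_ne_zero {X : Finset V} {x y : V} (hx : x ∈ X) (hy : y ∈ X) :
    kappa X ⟪x, y⟫_ℝ ≠ 0 :=
  Finset.card_ne_zero.mpr ⟨(x, y), by simp [hx, hy]⟩

def pInnₗ (m : ℝ) (X : Finset V) : Polynomial ℝ →ₗ[ℝ] Polynomial ℝ →ₗ[ℝ] ℝ :=
  LinearMap.mk₂ ℝ (pInn m X)
    (fun p₁ p₂ q => by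
      simp only [pInn, Polynomial.eval_add, add_mul, mul_add, Finset.sum_add_distrib])
    (fun c p q => by
      simp only [pInn, Polynomial.eval_smul, smul_eq_mul, Finset.mul_sum]
      exact Finset.sum_congr rfl fun _ _ => by ring)
    (fun p q₁ q₂ => by
      simp only [pInn, Polynomial.eval_add, mul_add, Finset.sum_add_distrib])
    (fun c p q => by
      simp only [pInn, Polynomial.eval_smul, smul_eq_mul, Finset.mul_sum]
      exact Finset.sum_congr rfl fun _ _ => by ring)

theorem pInn_eq_sum (m : ℝ) (X : Finset V) (p q : Polynomial ℝ) :
    pInn m X p q = ∑ α ∈ Aset' m X, (kappa X α : ℝ) / (X.card : ℝ) ^ 2 * (p.eval α * q.eval α) := by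
  rw [pInn, Finset.mul_sum]
  exact Finset.sum_congr rfl fun _ _ => by ring

def predegreeSum (s : ℕ) (q : ℕ → Polynomial ℝ) : Polynomial ℝ :=
  ∑ i ∈ Finset.range (s + 1), q i

section Predegree

variable {m : ℝ} {X : Finset V} {s : ℕ} {q : ℕ → Polynomial ℝ}

theorem IsPredegree.pInn_predegreeSum_self (hq : IsPredegree m X s q) {k : ℕ} (hk : k ≤ s) :
    pInn m X (predegreeSum s q) (q k) = (q k).eval m := by
  change pInnₗ m X (∑ i ∈ Finset.range (s + 1), q i) (q k) = _
  rw [map_sum, LinearMap.sum_apply, Finset.sum_eq_single_of_mem k (by simpa [Nat.lt_succ_iff])]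
  · exact (hq.2 k hk k hk).trans (if_pos rfl)
  · intro i hi hik
    exact (hq.2 i (Nat.lt_succ_iff.mp (Finset.mem_range.mp hi)) k hk).trans (if_neg hik)

theorem IsPredegree.pInn_predegreeSum (hq : IsPredegree m X s q) {p : Polynomial ℝ}
    (hp : p.natDegree ≤ s) : pInn m X (predegreeSum s q) p = p.eval m := by
  have hdeg : ∀ k ≤ s, (q k).degree = k := fun k hk =>
    (Polynomial.degree_eq_iff_natDegree_eq (hq.1 k hk).2).mpr (hq.1 k hk).1
  have hspan : p ∈ Submodule.span ℝ (q '' Set.Iic s) := by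
    rw [Polynomial.span_image_Iic_eq_degreeLE hdeg, Polynomial.mem_degreeLE]
    exact Polynomial.degree_le_of_natDegree_le hp
  refine LinearMap.eqOn_span' (f := pInnₗ m X (predegreeSum s q)) (g := Polynomial.leval m)
    ?_ hspan
  rintro _ ⟨k, hk, rfl⟩
  exact hq.pInn_predegreeSum_self hk

theorem IsPredegree.kappa_mul_eval_predegreeSum (hq : IsPredegree m X s q)
    (hs : (Aset X).card ≤ s) {β : ℝ} (hβ : β ∈ Aset' m X) :
    (kappa X β : ℝ) / (X.card : ℝ) ^ 2 * (predegreeSum s q).eval β = if β = m then 1 else 0 := by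
  refine mul_eval_eq_ite_of_forall_natDegree_lt (S := Aset' m X)
    (w := fun α => (kappa X α : ℝ) / (X.card : ℝ) ^ 2) (Finset.mem_insert_self m _)
    (fun p hp => ?_) hβ
  rw [← pInn_eq_sum]
  exact hq.pInn_predegreeSum (by have := Finset.card_insert_le m (Aset X); rw [Aset'] at hp; omega)

end Predegree

theorem onSphere.eval_predegreeSum_inner {m : ℝ} {X : Finset V} (hsph : onSphere m X)
    {s : ℕ} (hs : (Aset X).card ≤ s) {q : ℕ → Polynomial ℝ} (hq : IsPredegree m X s q)
    {x y : V} (hx : x ∈ X) (hy : y ∈ X) :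
    1 / (X.card : ℝ) * (predegreeSum s q).eval ⟪x, y⟫_ℝ = if x = y then 1 else 0 := by
  have key := hq.kappa_mul_eval_predegreeSum hs (hsph.inner_mem_Aset' hx hy)
  have hn : (X.card : ℝ) ≠ 0 := Nat.cast_ne_zero.mpr (Finset.card_ne_zero.mpr ⟨x, hx⟩)
  by_cases hxy : x = y
  · subst hxy
    rw [hsph x hx, if_pos rfl, hsph.kappa_eq_card,
      show (X.card : ℝ) / (X.card : ℝ) ^ 2 = 1 / X.card by field_simp] at key
    rw [hsph x hx, if_pos rfl, key]
  · have hne : ⟪x, y⟫_ℝ ≠ m := fun h => hxy (hsph.eq_of_inner_eq hx hy h)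
    have hκ : (kappa X ⟪x, y⟫_ℝ : ℝ) ≠ 0 := Nat.cast_ne_zero.mpr (kappa_inner_ne_zero hx hy)
    rw [if_neg hne] at key
    rw [if_neg hxy, (mul_eq_zero.mp key).resolve_left (div_ne_zero hκ (pow_ne_zero 2 hn)), mul_zero]

theorem statement_7_general {m : ℕ} (X : Finset (EuclideanSpace ℝ (Fin m)))
    (hsph : onSphere (m : ℝ) X) (s : ℕ) (hs : (Aset X).card = s)
    (q : ℕ → Polynomial ℝ) (hq : IsPredegree (m : ℝ) X s q) :
    Matrix.of (fun x y : X =>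
        (1 / (X.card : ℝ)) * ∑ i ∈ Finset.range (s + 1), (q i).eval ⟪x.1, y.1⟫_ℝ) =
      (1 : Matrix X X ℝ) := by
  ext x y
  rw [Matrix.of_apply, Matrix.one_apply, ← Polynomial.eval_finsetSum, ← predegreeSum,
    hsph.eval_predegreeSum_inner hs.le hq x.2 y.2]
  congr 1
  exact propext Subtype.ext_iff.symm

theorem statement_7 {m : ℕ} (X : Finset (EuclideanSpace ℝ (Fin m))) (hne : X.Nonempty)
    (hsph : onSphere (m : ℝ) X) (hdes : IsTwoDesign X) (s : ℕ) (hs : (Aset X).card = s)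
    (q : ℕ → Polynomial ℝ) (hq : IsPredegree (m : ℝ) X s q) :
    Matrix.of (fun x y : X =>
        (1 / (X.card : ℝ)) * ∑ i ∈ Finset.range (s + 1), (q i).eval ⟪x.1, y.1⟫_ℝ) =
      (1 : Matrix X X ℝ) :=
  statement_7_general X hsph s hs q hq

end
end

section
/- Let X be a spherical 2-design in √m S^{m-1} of size n which is an s-distance set with degree S = s. Let F_s be the projection onto Harm_s(X), q_s the degree-s predegree polynomial, and μ = tr(F_s) = (1/n)∑_{x∈X} m_s(x) where m_s(x) = n(F_s)_{x,x}. Then the orthogonal projection of F_s onto the space 𝔄* = {(1/n)p((nG)^∘) : p ∈ ℝ[t]} with respect to the trace inner product equals (μ/(n q_s(m))) · q_s((nG)^∘). -/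
/-!
For the weights `κ_α`, the predegree polynomials `q_0, …, q_s` are `s + 1` orthogonal nonzero
functions on the `s + 1` points of `A'(X)`, hence an orthogonal basis of all functions there.
For `i < s` the zonal function `q_i(⟨x, ·⟩)` lies in `Pol_{s-1}(X) ⊥ Harm_s(X)`, so it is killed by
`F_s`. Therefore the pairing of `F_s` with `f(⟨x, y⟩)` only sees the `q_s`-coefficient
`⟨q_s, f⟩ / q_s(m)` of `f`. For `f = n·[α = m]` every coefficient is `1` and the pairing is
`n tr F_s`. So `F_s` and `(tr F_s / (n q_s(m))) q_s((nG)^∘)` both pair with `p` to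
`n tr F_s ⟨q_s, p⟩ / q_s(m)`.
-/

open scoped InnerProductSpace Classical

noncomputable section

variable {V : Type*} [NormedAddCommGroup V] [InnerProductSpace ℝ V]

theorem Matrix.trace_transpose_mul_eq_sum {n R : Type*} [Fintype n] [NonUnitalNonAssocSemiring R]
    (A B : Matrix n n R) : (A.transpose * B).trace = ∑ i, ∑ j, A i j * B i j := by
  simp only [Matrix.trace, Matrix.diag_apply, Matrix.mul_apply, Matrix.transpose_apply]
  exact Finset.sum_comm

theorem LinearMap.BilinForm.eq_sum_smul_of_iIsOrtho {K W ι : Type*} [Field K] [AddCommGroup W]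
    [Module K W] [FiniteDimensional K W] [Fintype ι] {B : LinearMap.BilinForm K W} {v : ι → W}
    (hortho : B.iIsOrtho v) (hv : ∀ i, B (v i) (v i) ≠ 0)
    (hcard : Fintype.card ι = Module.finrank K W) (w : W) :
    w = ∑ i, (B (v i) w / B (v i) (v i)) • v i := by
  have hspan := (LinearMap.BilinForm.linearIndependent_of_iIsOrtho hortho hv
    ).span_eq_top_of_card_eq_finrank' hcard
  obtain ⟨c, rfl⟩ :=
    (Submodule.mem_span_range_iff_exists_fun K).1 (hspan ▸ Submodule.mem_top : w ∈ _)
  refine Finset.sum_congr rfl fun j _ => ?_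
  have hpair : B (v j) (∑ i, c i • v i) = c j * B (v j) (v j) := by
    rw [map_sum, Finset.sum_eq_single j
      (fun i _ hij => by rw [map_smul, hortho (Ne.symm hij), smul_zero]) (by simp)]
    simp
  rw [hpair, mul_div_cancel_right₀ _ (hv j)]

namespace onSphere

variable {m : ℝ} {X : Finset V}

theorem eq_of_inner_eq_s12 (hsph : onSphere m X) {x y : V} (hx : x ∈ X) (hy : y ∈ X)
    (h : ⟪x, y⟫_ℝ = m) : x = y := by
  have h0 : ⟪x - y, x - y⟫_ℝ = 0 := by
    rw [inner_sub_left, inner_sub_right, inner_sub_right, real_inner_comm x y, h, hsph x hx,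
      hsph y hy]
    ring
  rwa [inner_self_eq_zero, sub_eq_zero] at h0

theorem inner_eq_iff (hsph : onSphere m X) (x y : X) : ⟪(x : V), (y : V)⟫_ℝ = m ↔ x = y :=
  ⟨fun h => Subtype.ext (hsph.eq_of_inner_eq_s12 x.2 y.2 h), fun h => h ▸ hsph x x.2⟩

theorem inner_mem_Aset'_s12 (hsph : onSphere m X) {x y : V} (hx : x ∈ X) (hy : y ∈ X) :
    ⟪x, y⟫_ℝ ∈ Aset' m X := by
  by_cases hxy : x = y
  · subst hxy
    rw [hsph x hx]
    exact Finset.mem_insert_self _ _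
  · exact Finset.mem_insert_of_mem (Finset.mem_image.2
      ⟨(x, y), Finset.mem_filter.2 ⟨Finset.mem_product.2 ⟨hx, hy⟩, hxy⟩, rfl⟩)

theorem notMem_Aset (hsph : onSphere m X) : m ∉ Aset X := by
  simp only [Aset, Finset.mem_image, Finset.mem_filter, Finset.mem_product, not_exists, not_and]
  rintro ⟨x, y⟩ ⟨⟨hx, hy⟩, hxy⟩ h
  exact hxy (hsph.eq_of_inner_eq_s12 hx hy h)

theorem card_Aset' (hsph : onSphere m X) : (Aset' m X).card = (Aset X).card + 1 :=
  Finset.card_insert_of_notMem hsph.notMem_Aset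

theorem kappa_self (hsph : onSphere m X) : kappa X m = X.card := by
  have hdiag : ((X ×ˢ X).filter fun p => ⟪p.1, p.2⟫_ℝ = m) = X.image fun x => (x, x) := by
    ext ⟨x, y⟩
    simp only [Finset.mem_filter, Finset.mem_product, Finset.mem_image, Prod.mk.injEq]
    constructor
    · rintro ⟨⟨hx, hy⟩, h⟩
      exact ⟨x, hx, rfl, hsph.eq_of_inner_eq_s12 hx hy h⟩
    · rintro ⟨z, hz, rfl, rfl⟩
      exact ⟨⟨hz, hz⟩, hsph z hz⟩
  rw [kappa, hdiag, Finset.card_image_of_injective _ fun x y h => congrArg Prod.fst h]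

theorem kappa_pos (hsph : onSphere m X) (hne : X.Nonempty) {α : ℝ} (hα : α ∈ Aset' m X) :
    0 < kappa X α := by
  rw [kappa, Finset.card_pos]
  rcases Finset.mem_insert.1 hα with rfl | hα
  · obtain ⟨x, hx⟩ := hne
    exact ⟨(x, x), Finset.mem_filter.2 ⟨Finset.mem_product.2 ⟨hx, hx⟩, hsph x hx⟩⟩
  · obtain ⟨p, hp, rfl⟩ := Finset.mem_image.1 hα
    exact ⟨p, Finset.mem_filter.2 ⟨(Finset.mem_filter.1 hp).1, rfl⟩⟩

theorem sum_sum_inner (hsph : onSphere m X) (g : ℝ → ℝ) :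
    ∑ x : X, ∑ y : X, g ⟪(x : V), (y : V)⟫_ℝ = ∑ α ∈ Aset' m X, (kappa X α : ℝ) * g α := by
  have hpairs : ∑ x : X, ∑ y : X, g ⟪(x : V), (y : V)⟫_ℝ = ∑ p ∈ X ×ˢ X, g ⟪p.1, p.2⟫_ℝ := by
    rw [Finset.sum_product, ← Finset.sum_coe_sort X fun x => ∑ y ∈ X, g ⟪x, y⟫_ℝ]
    exact Finset.sum_congr rfl fun x _ => Finset.sum_coe_sort X fun y => g ⟪(x : V), y⟫_ℝ
  rw [hpairs, ← Finset.sum_fiberwise_of_maps_to (g := fun p : V × V => ⟪p.1, p.2⟫_ℝ) fun p hp =>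
      hsph.inner_mem_Aset'_s12 (Finset.mem_product.1 hp).1 (Finset.mem_product.1 hp).2]
  refine Finset.sum_congr rfl fun α _ => ?_
  rw [Finset.sum_congr rfl fun p hp => by rw [(Finset.mem_filter.1 hp).2], Finset.sum_const,
    kappa, nsmul_eq_mul]

end onSphere

theorem Polynomial.sum_mul_eval_mul_self_pos {A : Finset ℝ} {w : ℝ → ℝ}
    (hw : ∀ a ∈ A, 0 < w a) {p : Polynomial ℝ} (hp : p ≠ 0) (hdeg : p.natDegree < A.card) :
    0 < ∑ a ∈ A, w a * (p.eval a * p.eval a) := by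
  obtain ⟨a, ha, hpa⟩ : ∃ a ∈ A, p.eval a ≠ 0 := by
    by_contra! hvanish
    exact hp (Polynomial.eq_zero_of_natDegree_lt_card_of_eval_eq_zero' p A hvanish hdeg)
  refine Finset.sum_pos' (fun b hb => ?_) ⟨a, ha, mul_pos (hw a ha) (mul_self_pos.2 hpa)⟩
  exact mul_nonneg (hw b hb).le (mul_self_nonneg _)

theorem Polynomial.eval_eq_sum_of_orthogonal {A : Finset ℝ} {w : ℝ → ℝ}
    (hw : ∀ a ∈ A, 0 < w a) {s : ℕ} (hA : A.card = s + 1) {q : ℕ → Polynomial ℝ}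
    (hq : ∀ i ≤ s, q i ≠ 0 ∧ (q i).natDegree ≤ s)
    (horth : ∀ i ≤ s, ∀ j ≤ s, i ≠ j → ∑ a ∈ A, w a * ((q i).eval a * (q j).eval a) = 0)
    (f : ℝ → ℝ) {a : ℝ} (ha : a ∈ A) :
    f a = ∑ i ∈ Finset.range (s + 1),
      (∑ b ∈ A, w b * ((q i).eval b * f b)) / (∑ b ∈ A, w b * ((q i).eval b * (q i).eval b)) *
        (q i).eval a := by
  let B : LinearMap.BilinForm ℝ (A → ℝ) := Matrix.toBilin' (Matrix.diagonal fun b => w b)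
  have hB (g h : ℝ → ℝ) : B (fun b => g b) (fun b => h b) = ∑ b ∈ A, w b * (g b * h b) := by
    rw [Matrix.toBilin'_apply', dotProduct, ← Finset.sum_coe_sort A]
    exact Finset.sum_congr rfl fun b _ => by rw [Matrix.mulVec_diagonal]; ring
  have hself (i : Fin (s + 1)) :
      B (fun b => (q i).eval b) (fun b => (q i).eval b) ≠ 0 := by
    rw [hB (fun b => (q i).eval b) (fun b => (q i).eval b)]
    exact (Polynomial.sum_mul_eval_mul_self_pos hw (hq i i.is_le).1
      (by rw [hA]; exact Nat.lt_succ_of_le (hq i i.is_le).2)).ne'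
  have hortho : B.iIsOrtho fun (i : Fin (s + 1)) (b : A) => (q i).eval b := by
    intro i j hij
    exact (hB (fun b => (q i).eval b) (fun b => (q j).eval b)).trans
      (horth i i.is_le j j.is_le (Fin.val_ne_of_ne hij))
  have hcard : Fintype.card (Fin (s + 1)) = Module.finrank ℝ (A → ℝ) := by
    rw [Module.finrank_fintype_fun_eq_card, Fintype.card_coe, hA, Fintype.card_fin]
  have h := congrFun (LinearMap.BilinForm.eq_sum_smul_of_iIsOrtho hortho hself hcard
    fun b => f b) ⟨a, ha⟩
  simp only [Finset.sum_apply, Pi.smul_apply, smul_eq_mul] at h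
  rw [h, ← Fin.sum_univ_eq_sum_range fun i => (∑ b ∈ A, w b * ((q i).eval b * f b)) /
    (∑ b ∈ A, w b * ((q i).eval b * (q i).eval b)) * (q i).eval a]
  refine Finset.sum_congr rfl fun i _ => ?_
  rw [hB (fun b => (q i).eval b) f, hB (fun b => (q i).eval b) (fun b => (q i).eval b)]

theorem Pol_le_perp_Harm_succ (X : Finset V) (k : ℕ) : Pol X k ≤ perp X (Harm X (k + 1)) := by
  intro g hg
  simp only [perp, Submodule.mem_iInf, LinearMap.mem_ker]
  intro f hf
  have hf : f ∈ perp X (Pol X k) := (Submodule.mem_inf.1 hf).2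
  simp only [perp, Submodule.mem_iInf, LinearMap.mem_ker] at hf
  change inn X f g = 0
  rw [inn, ← hf g hg]
  simp only [innL, LinearMap.coe_mk, AddHom.coe_mk, inn, mul_comm]

theorem IsProjOnto.sum_mul_eval_inner_eq_zero {X : Finset V} {s : ℕ} {P : Matrix X X ℝ}
    (hP : IsProjOnto X (Harm X s) P) {r : Polynomial ℝ} (hr : r.natDegree < s) (x : X) :
    ∑ y, P x y * r.eval ⟪(x : V), (y : V)⟫_ℝ = 0 := by
  obtain ⟨k, rfl⟩ : ∃ k, s = k + 1 := ⟨s - 1, by omega⟩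
  have hzonal : (fun y : X => r.eval ⟪(x : V), (y : V)⟫_ℝ) ∈ Pol X k :=
    Submodule.subset_span ⟨x, x.2, r, Nat.lt_succ_iff.1 hr, rfl⟩
  exact congrFun (hP.2.2 _ (Pol_le_perp_Harm_succ X k hzonal)) x

/-- The coefficient `⟨q i, f⟩ / (q i)(m)` of `q i` in the expansion of `f` on `A'(X)`, with the
inner product `pInn` extended from polynomials to functions. -/
def predegreeCoeff (m : ℝ) (X : Finset V) (q : ℕ → Polynomial ℝ) (i : ℕ) (f : ℝ → ℝ) : ℝ :=
  (∑ α ∈ Aset' m X, (kappa X α : ℝ) * ((q i).eval α * f α)) / ((X.card : ℝ) ^ 2 * (q i).eval m)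

namespace IsPredegree

variable {m : ℝ} {X : Finset V} {s : ℕ} {q : ℕ → Polynomial ℝ}

theorem sum_kappa_mul_eval (hne : X.Nonempty) (hq : IsPredegree m X s q) {i j : ℕ} (hi : i ≤ s)
    (hj : j ≤ s) :
    ∑ α ∈ Aset' m X, (kappa X α : ℝ) * ((q i).eval α * (q j).eval α) =
      (X.card : ℝ) ^ 2 * if i = j then (q i).eval m else 0 := by
  have hN : (X.card : ℝ) ≠ 0 := Nat.cast_ne_zero.2 hne.card_pos.ne'
  rw [← hq.2 i hi j hj, pInn, ← mul_assoc, mul_one_div_cancel (pow_ne_zero 2 hN), one_mul]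

theorem eval_ne_zero (hne : X.Nonempty) (hsph : onSphere m X) (hs : (Aset X).card = s)
    (hq : IsPredegree m X s q) {i : ℕ} (hi : i ≤ s) : (q i).eval m ≠ 0 := by
  have hpos := Polynomial.sum_mul_eval_mul_self_pos (fun α hα => Nat.cast_pos.2
    (hsph.kappa_pos hne hα)) (hq.1 i hi).2 (by rw [hsph.card_Aset', hs, (hq.1 i hi).1]; omega)
  rw [hq.sum_kappa_mul_eval hne hi hi, if_pos rfl] at hpos
  exact right_ne_zero_of_mul hpos.ne'

theorem eval_eq_sum_predegreeCoeff_mul (hne : X.Nonempty) (hsph : onSphere m X)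
    (hs : (Aset X).card = s) (hq : IsPredegree m X s q) (f : ℝ → ℝ) {α : ℝ}
    (hα : α ∈ Aset' m X) :
    f α = ∑ i ∈ Finset.range (s + 1), predegreeCoeff m X q i f * (q i).eval α := by
  rw [Polynomial.eval_eq_sum_of_orthogonal (fun β hβ => Nat.cast_pos.2 (hsph.kappa_pos hne hβ))
    (by rw [hsph.card_Aset', hs]) (fun i hi => ⟨(hq.1 i hi).2, (hq.1 i hi).1.trans_le hi⟩)
    (fun i hi j hj hij => by rw [hq.sum_kappa_mul_eval hne hi hj, if_neg hij, mul_zero]) f hα]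
  refine Finset.sum_congr rfl fun i hi => ?_
  have hi : i ≤ s := Nat.lt_succ_iff.1 (Finset.mem_range.1 hi)
  rw [hq.sum_kappa_mul_eval hne hi hi, if_pos rfl, predegreeCoeff]

theorem sum_sum_mul_eq_predegreeCoeff_mul (hne : X.Nonempty) (hsph : onSphere m X)
    (hs : (Aset X).card = s) (hq : IsPredegree m X s q) {P : Matrix X X ℝ}
    (hP : IsProjOnto X (Harm X s) P) (f : ℝ → ℝ) :
    ∑ x, ∑ y, P x y * f ⟪(x : V), (y : V)⟫_ℝ =
      predegreeCoeff m X q s f * ∑ x, ∑ y, P x y * (q s).eval ⟪(x : V), (y : V)⟫_ℝ := by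
  set c : ℕ → ℝ := fun i => predegreeCoeff m X q i f
  have hrow (x : X) : ∑ y, P x y * f ⟪(x : V), (y : V)⟫_ℝ =
      c s * ∑ y, P x y * (q s).eval ⟪(x : V), (y : V)⟫_ℝ := by
    calc ∑ y, P x y * f ⟪(x : V), (y : V)⟫_ℝ
        = ∑ y, P x y * (∑ i ∈ Finset.range s, c i * (q i).eval ⟪(x : V), (y : V)⟫_ℝ +
            c s * (q s).eval ⟪(x : V), (y : V)⟫_ℝ) := by
          refine Finset.sum_congr rfl fun y _ => ?_
          rw [hq.eval_eq_sum_predegreeCoeff_mul hne hsph hs f (hsph.inner_mem_Aset'_s12 x.2 y.2), Finset.sum_range_succ]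
      _ = ∑ i ∈ Finset.range s, c i * ∑ y, P x y * (q i).eval ⟪(x : V), (y : V)⟫_ℝ +
            c s * ∑ y, P x y * (q s).eval ⟪(x : V), (y : V)⟫_ℝ := by
          simp only [mul_add, Finset.sum_add_distrib, Finset.mul_sum]
          rw [Finset.sum_comm]
          congr 1
          · exact Finset.sum_congr rfl fun _ _ => Finset.sum_congr rfl fun _ _ => by ring
          · exact Finset.sum_congr rfl fun _ _ => by ring
      _ = c s * ∑ y, P x y * (q s).eval ⟪(x : V), (y : V)⟫_ℝ := by
          rw [Finset.sum_eq_zero fun i hi => by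
            rw [hP.sum_mul_eval_inner_eq_zero (by
              rw [(hq.1 i (Finset.mem_range.1 hi).le).1]; exact Finset.mem_range.1 hi), mul_zero],
            zero_add]
  rw [Finset.sum_congr rfl fun x _ => hrow x, ← Finset.mul_sum]

theorem sum_sum_mul_eval_eq_card_mul_trace (hne : X.Nonempty) (hsph : onSphere m X)
    (hs : (Aset X).card = s) (hq : IsPredegree m X s q) {P : Matrix X X ℝ}
    (hP : IsProjOnto X (Harm X s) P) :
    ∑ x, ∑ y, P x y * (q s).eval ⟪(x : V), (y : V)⟫_ℝ = X.card * P.trace := by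
  set δ : ℝ → ℝ := fun α => if α = m then (X.card : ℝ) else 0
  have hδ : ∑ β ∈ Aset' m X, (kappa X β : ℝ) * ((q s).eval β * δ β) =
      (X.card : ℝ) ^ 2 * (q s).eval m := by
    rw [Aset', Finset.sum_insert hsph.notMem_Aset, Finset.sum_eq_zero fun β hβ => by
      rw [show δ β = 0 from if_neg (ne_of_mem_of_not_mem hβ hsph.notMem_Aset), mul_zero,
        mul_zero], hsph.kappa_self, show δ m = X.card from if_pos rfl]
    ring
  have hN : (X.card : ℝ) ≠ 0 := Nat.cast_ne_zero.2 hne.card_pos.ne'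
  have hcoeff := hq.sum_sum_mul_eq_predegreeCoeff_mul hne hsph hs hP δ
  rw [predegreeCoeff, hδ, div_self (mul_ne_zero (pow_ne_zero 2 hN) (hq.eval_ne_zero hne hsph hs le_rfl)),
    one_mul] at hcoeff
  rw [← hcoeff, Matrix.trace, Finset.mul_sum]
  refine Finset.sum_congr rfl fun x _ => ?_
  simp only [δ, hsph.inner_eq_iff, mul_ite, mul_zero, Finset.sum_ite_eq, Finset.mem_univ,
    if_true, Matrix.diag_apply, mul_comm]

end IsPredegree

theorem statement_12_general {m : ℕ} (X : Finset (EuclideanSpace ℝ (Fin m))) (hne : X.Nonempty)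
    (hsph : onSphere (m : ℝ) X) (s : ℕ) (hs : (Aset X).card = s)
    (F : ℕ → Matrix X X ℝ) (hF : ∀ i, IsProjOnto X (Harm X i) (F i))
    (q : ℕ → Polynomial ℝ) (hq : IsPredegree (m : ℝ) X s q) :
    ∀ p : Polynomial ℝ,
      Matrix.trace ((F s - Matrix.of fun x y : X =>
            (Matrix.trace (F s) / ((X.card : ℝ) * (q s).eval (m : ℝ))) *
              (q s).eval ⟪x.1, y.1⟫_ℝ).transpose *
          (Matrix.of fun x y : X => (1 / (X.card : ℝ)) * p.eval ⟪x.1, y.1⟫_ℝ)) = 0 := by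
  intro p
  have hN : (X.card : ℝ) ≠ 0 := Nat.cast_ne_zero.2 hne.card_pos.ne'
  have hpair : ∑ x : X, ∑ y : X, F s x y * p.eval ⟪x.1, y.1⟫_ℝ =
      (∑ x : X, ∑ y : X, (q s).eval ⟪x.1, y.1⟫_ℝ * p.eval ⟪x.1, y.1⟫_ℝ) /
        ((X.card : ℝ) ^ 2 * (q s).eval (m : ℝ)) * (X.card * (F s).trace) := by
    rw [hq.sum_sum_mul_eq_predegreeCoeff_mul hne hsph hs (hF s) fun t => p.eval t, predegreeCoeff,
      hq.sum_sum_mul_eval_eq_card_mul_trace hne hsph hs (hF s),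
      hsph.sum_sum_inner fun t => (q s).eval t * p.eval t]
  set c := (F s).trace / ((X.card : ℝ) * (q s).eval (m : ℝ)) with hc
  rw [Matrix.trace_transpose_mul_eq_sum]
  calc ∑ x, ∑ y, (F s - Matrix.of fun x y : X => c * (q s).eval ⟪x.1, y.1⟫_ℝ) x y *
        Matrix.of (fun x y : X => 1 / (X.card : ℝ) * p.eval ⟪x.1, y.1⟫_ℝ) x y
      = 1 / X.card * ∑ x : X, ∑ y : X, F s x y * p.eval ⟪x.1, y.1⟫_ℝ -
          c / X.card * ∑ x : X, ∑ y : X, (q s).eval ⟪x.1, y.1⟫_ℝ * p.eval ⟪x.1, y.1⟫_ℝ := by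
        simp only [Finset.mul_sum, ← Finset.sum_sub_distrib]
        exact Finset.sum_congr rfl fun x _ => Finset.sum_congr rfl fun y _ => by
          simp only [Matrix.sub_apply, Matrix.of_apply]; ring
    _ = 0 := by
        rw [hpair, hc]
        field_simp
        ring

theorem statement_12 {m : ℕ} (X : Finset (EuclideanSpace ℝ (Fin m))) (hne : X.Nonempty)
    (hsph : onSphere (m : ℝ) X) (hdes : IsTwoDesign X) (s : ℕ) (hs : (Aset X).card = s)
    (hdeg : degS X = s)
    (F : ℕ → Matrix X X ℝ) (hF : ∀ i, IsProjOnto X (Harm X i) (F i))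
    (q : ℕ → Polynomial ℝ) (hq : IsPredegree (m : ℝ) X s q) :
    ∀ p : Polynomial ℝ,
      Matrix.trace ((F s - Matrix.of fun x y : X =>
            (Matrix.trace (F s) / ((X.card : ℝ) * (q s).eval (m : ℝ))) *
              (q s).eval ⟪x.1, y.1⟫_ℝ).transpose *
          (Matrix.of fun x y : X => (1 / (X.card : ℝ)) * p.eval ⟪x.1, y.1⟫_ℝ)) = 0 :=
  statement_12_general X hne hsph s hs F hF q hq

end
end

section
/- Let X be a spherical 2-design in √m S^{m-1} of degree S. Then Harm_j(X) ≠ {0} for all 0 ≤ j ≤ S, and C(X) = ⊕_{i=0}^S Harm_i(X) (orthogonal direct sum with respect to (f,g) = (1/n)∑_{x∈X}f(x)g(x)). -/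
/-!
If `v ⊥ Pol_n(X)`, then `∑ₓ v(x) ⟪a, x⟫ⁿ = 0` for every `a ∈ X`, so the moment tensor
`T = ∑ₓ v(x) x ⊗ ⋯ ⊗ x` has `‖T‖² = ∑_{x,y} v(x) v(y) ⟪x, y⟫ⁿ = 0`: `v` is orthogonal to every
product of `n` linear forms. Hence `v ⊥ Pol_{k+1}` implies `⟪a, ·⟫ v ⊥ Pol_k`, and a plateau
`Pol_k = Pol_{k+1}` propagates to `Pol_{k+1} = Pol_{k+2}`. On a sphere `⟪a, x⟫ = ⟪a, a⟫` forces
`x = a`, so interpolation polynomials isolate every point and the chain `Pol_0 ≤ Pol_1 ≤ ⋯`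
reaches `C(X)`; it therefore increases strictly up to the degree `S`. Finally the modular law
gives `Pol_{k+1} = Pol_k ⊕ Harm_{k+1}`.
-/

open scoped InnerProductSpace Classical

noncomputable section

variable {V : Type*} [NormedAddCommGroup V] [InnerProductSpace ℝ V]

section Orthogonality

variable {α : Type*} {X : Finset α}

@[simp]
lemma innL_apply (f g : X → ℝ) : innL X f g = inn X f g := rfl

lemma inn_comm (f g : X → ℝ) : inn X f g = inn X g f := by
  simp only [inn, mul_comm (f _)]

-- The normalisation `1 / #X` only vanishes when `X = ∅`, where the sum is empty as well.
lemma inn_eq_zero_iff {f g : X → ℝ} : inn X f g = 0 ↔ ∑ x, f x * g x = 0 := by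
  rcases X.eq_empty_or_nonempty with rfl | hX
  · simp [inn]
  · simp [inn, hX.card_pos.ne']

lemma mem_perp {W : Submodule ℝ (X → ℝ)} {v : X → ℝ} :
    v ∈ perp X W ↔ ∀ f ∈ W, inn X f v = 0 := by
  simp only [perp, Submodule.mem_iInf, LinearMap.mem_ker, innL_apply]

lemma perp_anti {W W' : Submodule ℝ (X → ℝ)} (h : W ≤ W') : perp X W' ≤ perp X W :=
  fun _ hv => mem_perp.2 fun f hf => mem_perp.1 hv f (h hf)

lemma mem_perp_span {S : Set (X → ℝ)} {v : X → ℝ} :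
    v ∈ perp X (Submodule.span ℝ S) ↔ ∀ f ∈ S, inn X f v = 0 := by
  have key : ∀ W : Submodule ℝ (X → ℝ), v ∈ perp X W ↔ W ≤ LinearMap.ker (innL X v) := by
    simp [mem_perp, SetLike.le_def, inn_comm _ v]
  simp [key, Submodule.span_le, Set.subset_def, inn_comm _ v]

/-- `C(X)` with `inn` is, up to the factor `1 / #X`, the Euclidean space `ℝ^X`. -/
def euclideanEquiv (X : Finset α) : (X → ℝ) ≃ₗ[ℝ] EuclideanSpace ℝ X :=
  (WithLp.linearEquiv 2 ℝ (X → ℝ)).symm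

lemma inner_euclideanEquiv (f g : X → ℝ) :
    ⟪euclideanEquiv X f, euclideanEquiv X g⟫_ℝ = ∑ x, f x * g x := by
  simp [euclideanEquiv, PiLp.inner_apply, mul_comm]

lemma perp_eq_comap_orthogonal (W : Submodule ℝ (X → ℝ)) :
    perp X W = (W.map (euclideanEquiv X).toLinearMap)ᗮ.comap (euclideanEquiv X).toLinearMap := by
  ext v
  simp only [mem_perp, inn_eq_zero_iff, Submodule.mem_comap, Submodule.mem_orthogonal,
    LinearEquiv.coe_coe]
  constructor
  · rintro h _ ⟨f, hf, rfl⟩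
    simpa [inner_euclideanEquiv] using h f hf
  · exact fun h f hf => by simpa [inner_euclideanEquiv] using h _ ⟨f, hf, rfl⟩

lemma perp_perp (W : Submodule ℝ (X → ℝ)) : perp X (perp X W) = W := by
  rw [perp_eq_comap_orthogonal, perp_eq_comap_orthogonal W, Submodule.map_comap_eq,
    LinearEquiv.range, top_inf_eq, Submodule.orthogonal_orthogonal, Submodule.comap_map_eq,
    LinearEquiv.ker, sup_bot_eq]

lemma sup_perp (W : Submodule ℝ (X → ℝ)) : W ⊔ perp X W = ⊤ := by
  apply Submodule.map_injective_of_injective (euclideanEquiv X).injective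
  rw [Submodule.map_sup, perp_eq_comap_orthogonal, Submodule.map_comap_eq, LinearEquiv.range,
    top_inf_eq, Submodule.sup_orthogonal_of_hasOrthogonalProjection, Submodule.map_top,
    LinearEquiv.range]

end Orthogonality

section Zonal

variable {X : Finset V}

lemma pol_mono {k l : ℕ} (h : k ≤ l) : Pol X k ≤ Pol X l :=
  Submodule.span_mono fun _ ⟨a, ha, p, hp, hf⟩ => ⟨a, ha, p, hp.trans h, hf⟩

lemma pol_eq_span_pow (k : ℕ) :
    Pol X k = Submodule.span ℝ {f | ∃ a ∈ X, ∃ i ≤ k, f = fun x => ⟪a, x.1⟫_ℝ ^ i} := by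
  apply le_antisymm
  · refine Submodule.span_le.2 ?_
    rintro _ ⟨a, ha, p, hp, rfl⟩
    have hsum : (fun x : X => p.eval ⟪a, x.1⟫_ℝ) =
        ∑ i ∈ Finset.range (k + 1), p.coeff i • fun x : X => ⟪a, x.1⟫_ℝ ^ i := by
      funext x
      simp [Finset.sum_apply, Polynomial.eval_eq_sum_range' (Nat.lt_succ_of_le hp)]
    rw [SetLike.mem_coe, hsum]
    exact Submodule.sum_mem _ fun i hi => Submodule.smul_mem _ _ <|
      Submodule.subset_span ⟨a, ha, i, Nat.lt_succ_iff.1 (Finset.mem_range.1 hi), rfl⟩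
  · refine Submodule.span_mono ?_
    rintro _ ⟨a, ha, i, hi, rfl⟩
    exact ⟨a, ha, Polynomial.X ^ i, by simpa using hi, by simp⟩

lemma mem_perp_pol {k : ℕ} {v : X → ℝ} :
    v ∈ perp X (Pol X k) ↔ ∀ a ∈ X, ∀ i ≤ k, ∑ x, ⟪a, x.1⟫_ℝ ^ i * v x = 0 := by
  simp only [pol_eq_span_pow, mem_perp_span, inn_eq_zero_iff]
  exact ⟨fun h a ha i hi => h _ ⟨a, ha, i, hi, rfl⟩, fun h _ ⟨a, ha, i, hi, hf⟩ => hf ▸ h a ha i hi⟩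

end Zonal

section Moments

variable {ι : Type*} [Fintype ι] (b : OrthonormalBasis ι ℝ V) {X : Finset V}

lemma prod_inner_eq_sum {n : ℕ} (g : Fin n → V) (x : V) :
    ∏ t, ⟪g t, x⟫_ℝ = ∑ j : Fin n → ι, ∏ t, ⟪g t, b (j t)⟫_ℝ * ⟪b (j t), x⟫_ℝ := by
  calc ∏ t, ⟪g t, x⟫_ℝ = ∏ t, ∑ r, ⟪g t, b r⟫_ℝ * ⟪b r, x⟫_ℝ :=
        Finset.prod_congr rfl fun t _ => (b.sum_inner_mul_inner _ _).symm
    _ = _ := by rw [Finset.prod_univ_sum, Fintype.piFinset_univ]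

/-- The coefficients, in the basis `b`, of the moment tensor `∑ₓ v(x) x ⊗ ⋯ ⊗ x`. -/
def moment (X : Finset V) (v : X → ℝ) {n : ℕ} (j : Fin n → ι) : ℝ :=
  ∑ x, v x * ∏ t, ⟪b (j t), x.1⟫_ℝ

lemma sum_prod_inner_mul_eq {n : ℕ} (g : Fin n → V) (v : X → ℝ) :
    ∑ x, (∏ t, ⟪g t, x.1⟫_ℝ) * v x =
      ∑ j : Fin n → ι, (∏ t, ⟪g t, b (j t)⟫_ℝ) * moment b X v j := by
  simp_rw [prod_inner_eq_sum b, moment, Finset.sum_mul, Finset.mul_sum, Finset.prod_mul_distrib]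
  rw [Finset.sum_comm]
  exact Finset.sum_congr rfl fun j _ => Finset.sum_congr rfl fun x _ => by ring

lemma sum_moment_sq (n : ℕ) (v : X → ℝ) :
    ∑ j : Fin n → ι, moment b X v j ^ 2 = ∑ x, v x * ∑ y, ⟪x.1, y.1⟫_ℝ ^ n * v y := by
  have hsq : ∀ j : Fin n → ι,
      moment b X v j ^ 2 = ∑ x, v x * ((∏ t, ⟪x.1, b (j t)⟫_ℝ) * moment b X v j) := by
    intro j
    nth_rw 1 [sq, moment, Finset.sum_mul]
    exact Finset.sum_congr rfl fun x _ => by simp_rw [real_inner_comm x.1]; ring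
  simp_rw [hsq]
  rw [Finset.sum_comm]
  simp_rw [← Finset.mul_sum, ← sum_prod_inner_mul_eq b, Finset.prod_const, Finset.card_univ,
    Fintype.card_fin]

lemma moment_eq_zero {n : ℕ} {v : X → ℝ} (h : ∀ a ∈ X, ∑ y, ⟪a, y.1⟫_ℝ ^ n * v y = 0)
    (j : Fin n → ι) : moment b X v j = 0 := by
  have hsum : ∑ j : Fin n → ι, moment b X v j ^ 2 = 0 := by
    rw [sum_moment_sq]
    exact Finset.sum_eq_zero fun x _ => by rw [h x.1 x.2, mul_zero]
  exact pow_eq_zero_iff two_ne_zero |>.1 <|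
    (Finset.sum_eq_zero_iff_of_nonneg fun j _ => sq_nonneg _).1 hsum j (Finset.mem_univ j)

end Moments

section Plateau

variable [FiniteDimensional ℝ V] {X : Finset V}

lemma sum_prod_inner_mul_eq_zero {n : ℕ} {v : X → ℝ}
    (h : ∀ a ∈ X, ∑ y, ⟪a, y.1⟫_ℝ ^ n * v y = 0) (g : Fin n → V) :
    ∑ x, (∏ t, ⟪g t, x.1⟫_ℝ) * v x = 0 := by
  rw [sum_prod_inner_mul_eq (stdOrthonormalBasis ℝ V)]
  simp [moment_eq_zero _ h]

lemma inner_mul_mem_perp_pol {k : ℕ} {v : X → ℝ} (hv : v ∈ perp X (Pol X (k + 1))) (a : V) :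
    (fun x => ⟪a, x.1⟫_ℝ * v x) ∈ perp X (Pol X k) := by
  refine mem_perp_pol.2 fun c _ i hi => ?_
  rw [← sum_prod_inner_mul_eq_zero (fun c hc => mem_perp_pol.1 hv c hc (i + 1) (by omega))
    (Fin.cons a fun _ => c)]
  refine Finset.sum_congr rfl fun x _ => ?_
  simp only [Fin.prod_univ_succ, Fin.cons_zero, Fin.cons_succ, Finset.prod_const,
    Finset.card_univ, Fintype.card_fin]
  ring

lemma pol_succ_eq_pol_succ_succ {k : ℕ} (h : Pol X k = Pol X (k + 1)) :
    Pol X (k + 1) = Pol X (k + 2) := by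
  have hperp : perp X (Pol X (k + 1)) = perp X (Pol X (k + 2)) := by
    refine le_antisymm (fun v hv => mem_perp_pol.2 fun a ha i hi => ?_)
      (perp_anti (pol_mono (by omega)))
    rcases Nat.lt_or_ge i (k + 2) with hlt | hge
    · exact mem_perp_pol.1 hv a ha i (by omega)
    · have hw := inner_mul_mem_perp_pol hv a
      rw [h, mem_perp_pol] at hw
      rw [show i = k + 1 + 1 by omega, ← hw a ha (k + 1) le_rfl]
      exact Finset.sum_congr rfl fun x _ => by ring
  rw [← perp_perp (Pol X (k + 1)), hperp, perp_perp]

lemma pol_eq_of_pol_eq_succ {k l : ℕ} (h : Pol X k = Pol X (k + 1)) (hkl : k ≤ l) :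
    Pol X l = Pol X k := by
  have hstep : ∀ l, k ≤ l → Pol X l = Pol X (l + 1) :=
    Nat.le_induction h fun _ _ ih => pol_succ_eq_pol_succ_succ ih
  induction l, hkl using Nat.le_induction with
  | base => rfl
  | succ l hl ih => rw [← hstep l hl, ih]

end Plateau

lemma Submodule.eq_top_of_forall_exists_single {K ι : Type*} [Field K] [Fintype ι]
    [DecidableEq ι] (W : Submodule K (ι → K))
    (h : ∀ a, ∃ f ∈ W, f a ≠ 0 ∧ ∀ x ≠ a, f x = 0) : W = ⊤ := by
  refine eq_top_iff.2 fun g _ => ?_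
  rw [← Finset.univ_sum_single g]
  refine Submodule.sum_mem _ fun a _ => ?_
  obtain ⟨f, hfW, hfa, hf⟩ := h a
  convert W.smul_mem (g a / f a) hfW using 1
  funext x
  by_cases hx : x = a
  · subst hx; simp [hfa]
  · simp [hx, hf x hx]

section Sphere

variable {X : Finset V} {μ : ℝ}

lemma eq_of_inner_eq_of_onSphere (hX : onSphere μ X) {a x : V} (ha : a ∈ X) (hx : x ∈ X)
    (h : ⟪a, x⟫_ℝ = μ) : x = a := by
  have h0 : ⟪a - x, a - x⟫_ℝ = 0 := by
    rw [inner_sub_left, inner_sub_right, inner_sub_right, hX a ha, hX x hx, h, real_inner_comm, h]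
    ring
  exact (sub_eq_zero.1 (inner_self_eq_zero.1 h0)).symm

lemma exists_mem_pol_card_single (hX : onSphere μ X) (a : X) :
    ∃ f ∈ Pol X X.card, f a ≠ 0 ∧ ∀ x ≠ a, f x = 0 := by
  set B := (X.image fun y => ⟪a.1, y⟫_ℝ).erase μ
  set p : Polynomial ℝ := ∏ α ∈ B, (Polynomial.X - Polynomial.C α)
  have hdeg : p.natDegree ≤ X.card := by
    rw [Polynomial.natDegree_finsetProd_X_sub_C_eq_card]
    exact (Finset.card_erase_le).trans Finset.card_image_le
  refine ⟨fun x => p.eval ⟪a.1, x.1⟫_ℝ, Submodule.subset_span ⟨a, a.2, p, hdeg, rfl⟩, ?_, ?_⟩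
  · simp only [p, Polynomial.eval_prod, Finset.prod_ne_zero_iff, Polynomial.eval_sub,
      Polynomial.eval_X, Polynomial.eval_C, hX a a.2]
    exact fun α hα => sub_ne_zero.2 (Finset.ne_of_mem_erase hα).symm
  · intro x hx
    simp only [p, Polynomial.eval_prod]
    refine Finset.prod_eq_zero (i := ⟪a.1, x.1⟫_ℝ) ?_ (by simp)
    exact Finset.mem_erase.2 ⟨fun h => hx (Subtype.ext (eq_of_inner_eq_of_onSphere hX a.2 x.2 h)),
      Finset.mem_image_of_mem _ x.2⟩

lemma pol_card_eq_top (hX : onSphere μ X) : Pol X X.card = ⊤ :=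
  Submodule.eq_top_of_forall_exists_single _ (exists_mem_pol_card_single hX)

lemma pol_degS_eq_top (hX : onSphere μ X) : Pol X (degS X) = ⊤ :=
  Nat.sInf_mem (s := {i | Pol X i = ⊤}) ⟨X.card, pol_card_eq_top hX⟩

lemma pol_ne_pol_succ_of_lt_degS [FiniteDimensional ℝ V] (hX : onSphere μ X) {j : ℕ}
    (hj : j < degS X) : Pol X j ≠ Pol X (j + 1) := by
  intro h
  have htop : Pol X j = ⊤ := by rw [← pol_eq_of_pol_eq_succ h hj.le, pol_degS_eq_top hX]
  exact (Nat.sInf_le htop).not_gt hj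

end Sphere

section Harmonic

variable {X : Finset V}

lemma harm_le_pol : ∀ i, Harm X i ≤ Pol X i
  | 0 => le_rfl
  | _ + 1 => inf_le_left

lemma pol_succ_eq_sup_harm (k : ℕ) : Pol X (k + 1) = Pol X k ⊔ Harm X (k + 1) := by
  calc Pol X (k + 1) = (Pol X k ⊔ perp X (Pol X k)) ⊓ Pol X (k + 1) := by
        rw [sup_perp, top_inf_eq]
    _ = Pol X k ⊔ perp X (Pol X k) ⊓ Pol X (k + 1) := sup_inf_assoc_of_le _ (pol_mono k.le_succ)
    _ = Pol X k ⊔ Harm X (k + 1) := by rw [inf_comm]; rfl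

lemma iSup_harm_eq_pol (k : ℕ) : ⨆ i ∈ Finset.range (k + 1), Harm X i = Pol X k := by
  induction k with
  | zero => simp [Harm]
  | succ k ih =>
    rw [Finset.range_add_one, Finset.iSup_insert, ih, sup_comm, pol_succ_eq_sup_harm]

lemma harm_zero_ne_bot (hX : X.Nonempty) : Harm X 0 ≠ ⊥ := by
  obtain ⟨a, ha⟩ := hX
  have hone : (fun _ => 1 : X → ℝ) ∈ Harm X 0 :=
    Submodule.subset_span ⟨a, ha, 1, by simp, by simp⟩
  intro hbot
  rw [hbot, Submodule.mem_bot] at hone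
  exact one_ne_zero (congrFun hone ⟨a, ha⟩)

lemma harm_succ_ne_bot {k : ℕ} (h : Pol X k ≠ Pol X (k + 1)) : Harm X (k + 1) ≠ ⊥ :=
  fun hbot => h (by rw [pol_succ_eq_sup_harm, hbot, sup_bot_eq])

lemma inn_eq_zero_of_mem_harm_of_lt {i j : ℕ} (hij : i < j) {f g : X → ℝ} (hf : f ∈ Harm X i)
    (hg : g ∈ Harm X j) : inn X f g = 0 := by
  obtain ⟨j, rfl⟩ : ∃ j', j = j' + 1 := ⟨j - 1, by omega⟩
  exact mem_perp.1 (Submodule.mem_inf.1 hg).2 f (pol_mono (by omega) (harm_le_pol i hf))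

end Harmonic

theorem statement_16_general {m : ℕ} (X : Finset (EuclideanSpace ℝ (Fin m))) (hne : X.Nonempty)
    (hsph : onSphere (m : ℝ) X) :
    (∀ j ≤ degS X, Harm X j ≠ ⊥) ∧
    (∀ i j, i ≠ j → ∀ f ∈ Harm X i, ∀ g ∈ Harm X j, inn X f g = 0) ∧
    (⨆ i ∈ Finset.range (degS X + 1), Harm X i) = ⊤ := by
  refine ⟨fun j hj => ?_, fun i j hij f hf g hg => ?_, ?_⟩
  · cases j with
    | zero => exact harm_zero_ne_bot hne
    | succ j => exact harm_succ_ne_bot (pol_ne_pol_succ_of_lt_degS hsph hj)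
  · rcases hij.lt_or_gt with h | h
    · exact inn_eq_zero_of_mem_harm_of_lt h hf hg
    · rw [inn_comm]
      exact inn_eq_zero_of_mem_harm_of_lt h hg hf
  · rw [iSup_harm_eq_pol, pol_degS_eq_top hsph]

theorem statement_16 {m : ℕ} (X : Finset (EuclideanSpace ℝ (Fin m))) (hne : X.Nonempty)
    (hsph : onSphere (m : ℝ) X) (hdes : IsTwoDesign X) :
    (∀ j ≤ degS X, Harm X j ≠ ⊥) ∧
    (∀ i j, i ≠ j → ∀ f ∈ Harm X i, ∀ g ∈ Harm X j, inn X f g = 0) ∧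
    (⨆ i ∈ Finset.range (degS X + 1), Harm X i) = ⊤ :=
  statement_16_general X hne hsph

end
end
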